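/- arXiv:2104.08629 — 3 statements merged into one kernel-verified Lean document; each statement's English description precedes it below -/
import Mathlib

section
/- Let 0 < a < 1. Then for every real number ω, the improper integral ∫₀^∞ t^{a-1} e^{-t²/2} cos(ω t) dt is strictly positive. -/
/-! With `b = (1 - a) / 2 > 0`, Euler's integral for `Γ(b)` writes `t ^ (a - 1) * e^{-s t²}` as
`Γ(b)⁻¹ ∫₀^∞ x ^ (b - 1) e^{-(x + s) t²} dx`, a positive mixture of Gaussians. The double integral
against `cos (ω t)` converges absolutely because `a > 0`, so the integrals may be exchanged, and the
cosine integral becomes a positive mixture of the Gaussian Fourier transforms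
`∫₀^∞ e^{-c t²} cos (ω t) dt = ½ √(π / c) e^{-ω² / (4 c)} > 0`. -/

open MeasureTheory Real Set

theorem setIntegral_pos_of_forall_pos {X : Type*} [MeasurableSpace X] {μ : Measure X}
    {s : Set X} {f : X → ℝ} (hs : MeasurableSet s) (hμs : μ s ≠ 0) (hf : IntegrableOn f s μ)
    (hpos : ∀ x ∈ s, 0 < f x) : 0 < ∫ x in s, f x ∂μ := by
  have hsupp : Function.support f ∩ s = s := inter_eq_right.2 fun x hx => (hpos x hx).ne'
  rw [setIntegral_pos_iff_support_of_nonneg_ae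
    ((ae_restrict_iff' hs).2 (ae_of_all _ fun x hx => (hpos x hx).le)) hf, hsupp]
  exact pos_iff_ne_zero.2 hμs

open Complex in
theorem integral_exp_neg_mul_sq_mul_cos {c : ℝ} (hc : 0 < c) (ω : ℝ) :
    ∫ t : ℝ, rexp (-c * t ^ 2) * Real.cos (ω * t) = √(π / c) * rexp (-ω ^ 2 / (4 * c)) := by
  have hc' : 0 < (c : ℂ).re := by simpa using hc
  have hint : Integrable (fun t : ℝ => cexp (I * ω * t) * cexp (-c * t ^ 2)) := by
    refine (integrable_cexp_quadratic hc' (I * ω) 0).congr (ae_of_all _ fun t => ?_)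
    simp only [← Complex.exp_add]
    ring_nf
  have hre (t : ℝ) : (cexp (I * ω * t) * cexp (-c * t ^ 2)).re
      = rexp (-c * t ^ 2) * Real.cos (ω * t) := by
    rw [← Complex.exp_add, Complex.exp_re]
    simp [← Complex.ofReal_pow]
  have hsqrt : ((π : ℂ) / c) ^ (1 / 2 : ℂ) = (√(π / c) : ℝ) := by
    rw [Real.sqrt_eq_rpow, Complex.ofReal_cpow (by positivity)]
    push_cast
    ring_nf
  calc ∫ t : ℝ, rexp (-c * t ^ 2) * Real.cos (ω * t)
      = (∫ t : ℝ, cexp (I * ω * t) * cexp (-c * t ^ 2)).re := by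
        simp only [← hre]
        exact integral_re hint
    _ = _ := by
        rw [fourierIntegral_gaussian hc', hsqrt, ← Complex.ofReal_pow, ← Complex.ofReal_neg]
        norm_cast

theorem integral_Ioi_exp_neg_mul_sq_mul_cos {c : ℝ} (hc : 0 < c) (ω : ℝ) :
    ∫ t in Ioi (0 : ℝ), exp (-c * t ^ 2) * cos (ω * t)
      = √(π / c) * exp (-ω ^ 2 / (4 * c)) / 2 := by
  have hsymm := integral_comp_abs (f := fun t => exp (-c * t ^ 2) * cos (ω * t))
  have heven (t : ℝ) :
      exp (-c * |t| ^ 2) * cos (ω * |t|) = exp (-c * t ^ 2) * cos (ω * t) := by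
    rcases abs_choice t with h | h <;> simp [h]
  simp only [heven, integral_exp_neg_mul_sq_mul_cos hc] at hsymm
  linarith

theorem integrableOn_rpow_mul_exp_neg_add_mul_sq {b : ℝ} (hb : 0 < b) (s : ℝ) {t : ℝ}
    (ht : t ≠ 0) : IntegrableOn (fun x : ℝ => x ^ (b - 1) * exp (-(x + s) * t ^ 2)) (Ioi 0) := by
  have hgamma : IntegrableOn (fun x : ℝ => x ^ (b - 1) * exp (-(t ^ 2) * x ^ (1 : ℝ))) (Ioi 0) :=
    integrableOn_rpow_mul_exp_neg_mul_rpow (by linarith) one_pos (by positivity)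
  refine IntegrableOn.congr_fun (hgamma.mul_const (exp (-s * t ^ 2))) (fun x _ => ?_)
    measurableSet_Ioi
  rw [rpow_one, mul_assoc, ← exp_add]
  ring_nf

theorem integral_Ioi_rpow_mul_exp_neg_add_mul_sq {b : ℝ} (hb : 0 < b) (s : ℝ) {t : ℝ}
    (ht : 0 < t) :
    ∫ x in Ioi (0 : ℝ), x ^ (b - 1) * exp (-(x + s) * t ^ 2)
      = Gamma b * t ^ (-2 * b) * exp (-s * t ^ 2) := by
  have hsplit (x : ℝ) : x ^ (b - 1) * exp (-(x + s) * t ^ 2)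
      = x ^ (b - 1) * exp (-(t ^ 2 * x)) * exp (-s * t ^ 2) := by
    rw [mul_assoc, ← exp_add]
    ring_nf
  have hpow : (1 / t ^ 2) ^ b = t ^ (-2 * b) := by
    rw [one_div, ← rpow_natCast, ← rpow_neg ht.le, ← rpow_mul ht.le]
    norm_num
  simp only [hsplit]
  rw [integral_mul_const, integral_rpow_mul_exp_neg_mul_Ioi hb (by positivity), hpow,
    mul_comm (t ^ _)]

theorem integrable_rpow_mul_exp_neg_add_mul_sq_mul_cos {b s : ℝ} (hb : 0 < b) (hb' : b < 1 / 2)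
    (hs : 0 < s) (ω : ℝ) :
    Integrable (Function.uncurry fun t x : ℝ => x ^ (b - 1) * exp (-(x + s) * t ^ 2) * cos (ω * t))
      ((volume.restrict (Ioi 0)).prod (volume.restrict (Ioi 0))) := by
  have hmeas : AEStronglyMeasurable
      (Function.uncurry fun t x : ℝ => x ^ (b - 1) * exp (-(x + s) * t ^ 2) * cos (ω * t))
      ((volume.restrict (Ioi 0)).prod (volume.restrict (Ioi 0))) := by
    apply Measurable.aestronglyMeasurable
    unfold Function.uncurry
    fun_prop
  have hnorm {t : ℝ} (ht : 0 < t) :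
      ∫ x in Ioi (0 : ℝ), ‖x ^ (b - 1) * exp (-(x + s) * t ^ 2) * cos (ω * t)‖
        = Gamma b * t ^ (-2 * b) * exp (-s * t ^ 2) * |cos (ω * t)| := by
    rw [← integral_Ioi_rpow_mul_exp_neg_add_mul_sq hb s ht, ← integral_mul_const]
    refine setIntegral_congr_fun measurableSet_Ioi fun x hx => ?_
    rw [norm_mul, norm_mul, norm_of_nonneg (rpow_nonneg (le_of_lt hx) _),
      norm_of_nonneg (exp_pos _).le, norm_eq_abs]
  have hdom : IntegrableOn (fun t : ℝ => Gamma b * (t ^ (-2 * b) * exp (-s * t ^ 2))) (Ioi 0) :=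
    (integrableOn_rpow_mul_exp_neg_mul_sq hs (by linarith)).const_mul _
  refine (integrable_prod_iff hmeas).2 ⟨?_, hdom.mono' hmeas.norm.integral_prod_right' ?_⟩
  · filter_upwards [ae_restrict_mem measurableSet_Ioi] with t (ht : 0 < t)
    exact (integrableOn_rpow_mul_exp_neg_add_mul_sq hb s ht.ne').mul_const (cos (ω * t))
  · filter_upwards [ae_restrict_mem measurableSet_Ioi] with t (ht : 0 < t)
    simp only [Function.uncurry_apply_pair]
    rw [norm_of_nonneg (integral_nonneg fun _ => norm_nonneg _), hnorm ht, ← mul_assoc]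
    exact mul_le_of_le_one_right (by positivity) (abs_cos_le_one _)

theorem integral_Ioi_rpow_mul_exp_neg_mul_sq_mul_cos_pos {a s : ℝ} (ha : 0 < a) (ha1 : a < 1)
    (hs : 0 < s) (ω : ℝ) :
    0 < ∫ t in Ioi (0 : ℝ), t ^ (a - 1) * exp (-s * t ^ 2) * cos (ω * t) := by
  set b := (1 - a) / 2 with hb_def
  have hb : 0 < b := by rw [hb_def]; linarith
  have hint := integrable_rpow_mul_exp_neg_add_mul_sq_mul_cos hb (by rw [hb_def]; linarith) hs ω
  have hmix : ∫ t in Ioi (0 : ℝ), ∫ x in Ioi (0 : ℝ),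
        x ^ (b - 1) * exp (-(x + s) * t ^ 2) * cos (ω * t)
      = Gamma b * ∫ t in Ioi (0 : ℝ), t ^ (a - 1) * exp (-s * t ^ 2) * cos (ω * t) := by
    rw [← integral_const_mul]
    refine setIntegral_congr_fun measurableSet_Ioi fun t (ht : 0 < t) => ?_
    rw [integral_mul_const, integral_Ioi_rpow_mul_exp_neg_add_mul_sq hb s ht,
      show -2 * b = a - 1 by ring]
    ring
  have hfourier : 0 < ∫ x in Ioi (0 : ℝ), ∫ t in Ioi (0 : ℝ),
      x ^ (b - 1) * exp (-(x + s) * t ^ 2) * cos (ω * t) := by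
    refine setIntegral_pos_of_forall_pos measurableSet_Ioi (by simp) hint.integral_prod_right
      fun x (hx : 0 < x) => ?_
    have hc : 0 < x + s := by linarith
    simp only [mul_assoc, integral_const_mul, integral_Ioi_exp_neg_mul_sq_mul_cos hc]
    positivity
  rw [← integral_integral_swap hint, hmix] at hfourier
  exact pos_of_mul_pos_right hfourier (Gamma_pos_of_pos hb).le

/-- For `0 < a < 1` and any real `ω`, the improper integral
`∫₀^∞ t^(a-1) e^(-t²/2) cos(ω t) dt` is strictly positive. -/
theorem positive_cosine_integral (a : ℝ) (ha : 0 < a) (ha1 : a < 1) (ω : ℝ) :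
    0 < ∫ t in Set.Ioi (0:ℝ), t ^ (a - 1) * Real.exp (-t ^ 2 / 2) * Real.cos (ω * t) := by
  convert integral_Ioi_rpow_mul_exp_neg_mul_sq_mul_cos_pos ha ha1 one_half_pos ω using 5
  ring_nf
end

section
/- Let γ > 0, h ∈ (0,1), p > 0, q ≥ 0 with β := ((1+2h)/3) p − (1−h) q > 0, and κ₁, κ₂ > 0. Define L = −γu∂ᵤ − γv∂ᵥ − ((α_h u² − v²)/z^{2/3})∂ᵤ − ((α_h+1) uv/z^{2/3})∂ᵥ + (1−h) u z^{1/3} ∂_z + (κ₁/z^{2/3})∂ᵤ² + (κ₂/z^{2/3})∂ᵥ², where α_h = 1/3 + 2h/3, and φ(u,v,z) = (u²+v²)^{p/2} z^q. Then for every C > 0 there exists r* > 0 such that for all (u,v,z) with u²+v² ≥ r*², C u ≥ |v|, and 0 < z ≤ 1, one has L φ(u,v,z) ≤ −γ p r^p z^q − (β/(2√(1+C²))) r^{p+1} z^{q − 2/3}, where r = √(u²+v²). -/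
open Real

/-- Partial derivative in the first variable. -/
noncomputable def pdu (f : ℝ → ℝ → ℝ → ℝ) : ℝ → ℝ → ℝ → ℝ :=
  fun u v z => deriv (fun u' => f u' v z) u

/-- Partial derivative in the second variable. -/
noncomputable def pdv (f : ℝ → ℝ → ℝ → ℝ) : ℝ → ℝ → ℝ → ℝ :=
  fun u v z => deriv (fun v' => f u v' z) v

/-- Partial derivative in the third variable. -/
noncomputable def pdz (f : ℝ → ℝ → ℝ → ℝ) : ℝ → ℝ → ℝ → ℝ :=
  fun u v z => deriv (fun z' => f u v z') z

/-- The interior generator `L` of the reflected SDE in `(u,v,z)` coordinates. -/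
noncomputable def Lop (γ h κ₁ κ₂ : ℝ) (f : ℝ → ℝ → ℝ → ℝ) (u v z : ℝ) : ℝ :=
  -γ * u * pdu f u v z - γ * v * pdv f u v z
    - (((1/3 + 2*h/3) * u ^ 2 - v ^ 2) / z ^ ((2:ℝ)/3)) * pdu f u v z
    - (((1/3 + 2*h/3) + 1) * u * v / z ^ ((2:ℝ)/3)) * pdv f u v z
    + (1 - h) * u * z ^ ((1:ℝ)/3) * pdz f u v z
    + (κ₁ / z ^ ((2:ℝ)/3)) * pdu (pdu f) u v z
    + (κ₂ / z ^ ((2:ℝ)/3)) * pdv (pdv f) u v z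

/-!
On the cone `|v| ≤ C u` one has `r ≤ √(1 + C²) u`, so the drift term `-β u r^p z^(q-2/3)` of
`L φ` is at most `-(β / √(1 + C²)) r^(p+1) z^(q-2/3)`. The diffusion terms are bounded by
`K r^(p-2) z^(q-2/3)` with `K = p (1 + |p - 2|) (κ₁ + κ₂)`, and are absorbed into half of the drift
as soon as `r ≥ max 1 (2 √(1 + C²) K / β)`; the `-γ` term passes through unchanged.
-/

open Filter Topology

section SqAddRpow

variable (c s : ℝ) {x : ℝ}

theorem hasDerivAt_sq_add_rpow (hx : 0 < x ^ 2 + c) :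
    HasDerivAt (fun y => (y ^ 2 + c) ^ s) (2 * s * x * (x ^ 2 + c) ^ (s - 1)) x := by
  have hbase : HasDerivAt (fun y => y ^ 2 + c) (2 * x) x := by
    simpa using (hasDerivAt_pow 2 x).add_const c
  convert hbase.rpow_const (p := s) (Or.inl hx.ne') using 1
  ring

theorem deriv_sq_add_rpow (hx : 0 < x ^ 2 + c) :
    deriv (fun y => (y ^ 2 + c) ^ s) x = 2 * s * x * (x ^ 2 + c) ^ (s - 1) :=
  (hasDerivAt_sq_add_rpow c s hx).deriv

theorem deriv_deriv_sq_add_rpow (hx : 0 < x ^ 2 + c) :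
    deriv (deriv fun y => (y ^ 2 + c) ^ s) x =
      2 * s * (x ^ 2 + c) ^ (s - 1) + 4 * s * (s - 1) * x ^ 2 * (x ^ 2 + c) ^ (s - 2) := by
  have hpos : ∀ᶠ y in 𝓝 x, 0 < y ^ 2 + c :=
    continuousAt_const.eventually_lt (by fun_prop) hx
  have hderiv :
      deriv (fun y => (y ^ 2 + c) ^ s) =ᶠ[𝓝 x] fun y => 2 * s * y * (y ^ 2 + c) ^ (s - 1) :=
    hpos.mono fun y hy => deriv_sq_add_rpow c s hy
  rw [hderiv.deriv_eq]
  have hlin : HasDerivAt (fun y => 2 * s * y) (2 * s) x := by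
    simpa using (hasDerivAt_id x).const_mul (2 * s)
  rw [show s - 2 = s - 1 - 1 by ring]
  exact (hlin.mul (hasDerivAt_sq_add_rpow c (s - 1) hx)).deriv.trans (by ring)

end SqAddRpow

theorem pdu_radialPow (p q : ℝ) :
    pdu (fun u v z => (u ^ 2 + v ^ 2) ^ (p / 2) * z ^ q) =
      fun u v z => deriv (fun y => (y ^ 2 + v ^ 2) ^ (p / 2)) u * z ^ q := by
  funext u v z
  exact deriv_mul_const_field _

theorem pdv_radialPow (p q : ℝ) :
    pdv (fun u v z => (u ^ 2 + v ^ 2) ^ (p / 2) * z ^ q) =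
      fun u v z => deriv (fun y => (y ^ 2 + u ^ 2) ^ (p / 2)) v * z ^ q := by
  funext u v z
  simp only [pdv, add_comm (u ^ 2)]
  exact deriv_mul_const_field _

theorem Lop_radialPow (γ h p q κ₁ κ₂ u v z : ℝ) (hR : 0 < u ^ 2 + v ^ 2) (hz : 0 < z) :
    Lop γ h κ₁ κ₂ (fun u v z => (u ^ 2 + v ^ 2) ^ (p / 2) * z ^ q) u v z =
      -γ * p * (u ^ 2 + v ^ 2) ^ (p / 2) * z ^ q
        + (u ^ 2 + v ^ 2) ^ (p / 2 - 2) * z ^ (q - 2 / 3)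
          * (-(((1 + 2 * h) / 3) * p - (1 - h) * q) * u * (u ^ 2 + v ^ 2) ^ 2
            + p * (κ₁ + κ₂) * (u ^ 2 + v ^ 2) + p * (p - 2) * (κ₁ * u ^ 2 + κ₂ * v ^ 2)) := by
  have hR' : 0 < v ^ 2 + u ^ 2 := by rwa [add_comm]
  set φ : ℝ → ℝ → ℝ → ℝ := fun u v z => (u ^ 2 + v ^ 2) ^ (p / 2) * z ^ q
  have hdu : pdu φ u v z = p * u * (u ^ 2 + v ^ 2) ^ (p / 2 - 1) * z ^ q := by
    simp only [φ, pdu_radialPow, deriv_sq_add_rpow _ _ hR]; ring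
  have hdv : pdv φ u v z = p * v * (u ^ 2 + v ^ 2) ^ (p / 2 - 1) * z ^ q := by
    simp only [φ, pdv_radialPow, deriv_sq_add_rpow _ _ hR', add_comm (v ^ 2)]; ring
  have hduu : pdu (pdu φ) u v z = (p * (u ^ 2 + v ^ 2) ^ (p / 2 - 1)
      + p * (p - 2) * u ^ 2 * (u ^ 2 + v ^ 2) ^ (p / 2 - 2)) * z ^ q := by
    rw [pdu_radialPow]
    simp only [pdu, deriv_mul_const_field, deriv_deriv_sq_add_rpow _ _ hR]; ring
  have hdvv : pdv (pdv φ) u v z = (p * (u ^ 2 + v ^ 2) ^ (p / 2 - 1)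
      + p * (p - 2) * v ^ 2 * (u ^ 2 + v ^ 2) ^ (p / 2 - 2)) * z ^ q := by
    rw [pdv_radialPow]
    simp only [pdv, deriv_mul_const_field, deriv_deriv_sq_add_rpow _ _ hR', add_comm (v ^ 2)]; ring
  have hdz : pdz φ u v z = (u ^ 2 + v ^ 2) ^ (p / 2) * (q * z ^ (q - 1)) := by
    simp only [φ, pdz, deriv_const_mul_field', Real.deriv_rpow_const]
  rw [Lop, hdu, hdv, hduu, hdvv, hdz]
  set R := u ^ 2 + v ^ 2
  set t := z ^ ((1 : ℝ) / 3)
  have ht : t ≠ 0 := (Real.rpow_pos_of_pos hz _).ne'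
  have hz_q : z ^ q = z ^ (q - 2 / 3) * t ^ 2 := by
    rw [← Real.rpow_natCast, ← Real.rpow_mul hz.le, ← Real.rpow_add hz]; norm_num
  have hz_q1 : z ^ (q - 1) = z ^ (q - 2 / 3) / t := by
    rw [← Real.rpow_sub hz]; ring_nf
  have hz_23 : z ^ ((2 : ℝ) / 3) = t ^ 2 := by
    rw [← Real.rpow_natCast, ← Real.rpow_mul hz.le]; norm_num
  have hR_1 : R ^ (p / 2 - 1) = R ^ (p / 2 - 2) * R := by
    rw [← Real.rpow_add_one hR.ne']; ring_nf
  have hR_0 : R ^ (p / 2) = R ^ (p / 2 - 2) * R ^ 2 := by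
    rw [← Real.rpow_add_natCast hR.ne']; norm_num
  rw [hz_q, hz_q1, hz_23, hR_1, hR_0]
  field_simp
  ring

theorem sqrt_sq_add_sq_le_of_abs_le {u v C : ℝ} (hu : 0 ≤ u) (h : |v| ≤ C * u) :
    √(u ^ 2 + v ^ 2) ≤ √(1 + C ^ 2) * u := by
  have hv : v ^ 2 ≤ C ^ 2 * u ^ 2 := by
    rw [← sq_abs, ← mul_pow]; exact pow_le_pow_left₀ (abs_nonneg v) h 2
  calc √(u ^ 2 + v ^ 2) ≤ √((1 + C ^ 2) * u ^ 2) := Real.sqrt_le_sqrt (by linarith)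
    _ = √(1 + C ^ 2) * u := by rw [Real.sqrt_mul (by positivity), Real.sqrt_sq hu]

theorem diffusion_terms_le {p κ₁ κ₂ u v : ℝ} (hp : 0 ≤ p) (hκ₁ : 0 ≤ κ₁) (hκ₂ : 0 ≤ κ₂) :
    p * (κ₁ + κ₂) * (u ^ 2 + v ^ 2) + p * (p - 2) * (κ₁ * u ^ 2 + κ₂ * v ^ 2) ≤
      p * (1 + |p - 2|) * (κ₁ + κ₂) * (u ^ 2 + v ^ 2) := by
  have hx : 0 ≤ κ₁ * u ^ 2 + κ₂ * v ^ 2 := by positivity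
  have hxR : κ₁ * u ^ 2 + κ₂ * v ^ 2 ≤ (κ₁ + κ₂) * (u ^ 2 + v ^ 2) := by
    nlinarith [sq_nonneg u, sq_nonneg v]
  have hsign : (p - 2) * (κ₁ * u ^ 2 + κ₂ * v ^ 2) ≤ |p - 2| * ((κ₁ + κ₂) * (u ^ 2 + v ^ 2)) :=
    calc (p - 2) * (κ₁ * u ^ 2 + κ₂ * v ^ 2) ≤ |p - 2| * (κ₁ * u ^ 2 + κ₂ * v ^ 2) := by
          gcongr; exact le_abs_self _
      _ ≤ |p - 2| * ((κ₁ + κ₂) * (u ^ 2 + v ^ 2)) := by gcongr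
  calc p * (κ₁ + κ₂) * (u ^ 2 + v ^ 2) + p * (p - 2) * (κ₁ * u ^ 2 + κ₂ * v ^ 2)
      = p * (κ₁ + κ₂) * (u ^ 2 + v ^ 2) + p * ((p - 2) * (κ₁ * u ^ 2 + κ₂ * v ^ 2)) := by ring
    _ ≤ p * (κ₁ + κ₂) * (u ^ 2 + v ^ 2) + p * (|p - 2| * ((κ₁ + κ₂) * (u ^ 2 + v ^ 2))) := by
        gcongr
    _ = p * (1 + |p - 2|) * (κ₁ + κ₂) * (u ^ 2 + v ^ 2) := by ring

theorem drift_dominates_diffusion {β p κ₁ κ₂ s u v r : ℝ} (hβ : 0 < β) (hp : 0 ≤ p) (hκ₁ : 0 ≤ κ₁)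
    (hκ₂ : 0 ≤ κ₂) (hs : 0 < s) (hr : r ^ 2 = u ^ 2 + v ^ 2) (hr1 : 1 ≤ r)
    (hrK : 2 * s * (p * (1 + |p - 2|) * (κ₁ + κ₂)) / β ≤ r) (hru : r ≤ s * u) :
    -β * u * (u ^ 2 + v ^ 2) ^ 2 + p * (κ₁ + κ₂) * (u ^ 2 + v ^ 2)
        + p * (p - 2) * (κ₁ * u ^ 2 + κ₂ * v ^ 2) ≤ -(β / (2 * s)) * r ^ 5 := by
  have hdiffusion := diffusion_terms_le (u := u) (v := v) hp hκ₁ hκ₂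
  set K := p * (1 + |p - 2|) * (κ₁ + κ₂)
  rw [← hr] at hdiffusion ⊢
  have hdrift : 2 * (β / (2 * s)) * r ^ 5 ≤ β * u * (r ^ 2) ^ 2 := by
    rw [show 2 * (β / (2 * s)) = β / s by field_simp, div_mul_eq_mul_div, div_le_iff₀ hs]
    have := mul_le_mul_of_nonneg_left hru (by positivity : 0 ≤ β * r ^ 4)
    nlinarith
  have hK : K ≤ β / (2 * s) * r ^ 3 := by
    rw [div_le_iff₀ hβ] at hrK
    rw [div_mul_eq_mul_div, le_div_iff₀ (by positivity)]
    nlinarith [pow_le_pow_right₀ hr1 (show 1 ≤ 3 by norm_num)]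
  have habsorb : K * r ^ 2 ≤ β / (2 * s) * r ^ 5 := by
    have := mul_le_mul_of_nonneg_right hK (sq_nonneg r)
    linarith [show r ^ 3 * r ^ 2 = r ^ 5 by ring]
  linarith

theorem Lyapunov_R0_general (γ h p q β κ₁ κ₂ : ℝ)
    (hp : 0 < p)
    (hβdef : β = ((1 + 2*h)/3) * p - (1 - h) * q) (hβ : 0 < β)
    (hκ₁ : 0 < κ₁) (hκ₂ : 0 < κ₂) :
    ∀ C > (0:ℝ), ∃ rstar > (0:ℝ), ∀ u v z : ℝ,
      rstar ^ 2 ≤ u ^ 2 + v ^ 2 → |v| ≤ C * u → 0 < z → z ≤ 1 →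
      Lop γ h κ₁ κ₂ (fun u v z => (u ^ 2 + v ^ 2) ^ (p/2) * z ^ q) u v z ≤
        -γ * p * (Real.sqrt (u ^ 2 + v ^ 2)) ^ p * z ^ q
          - (β / (2 * Real.sqrt (1 + C ^ 2)))
            * (Real.sqrt (u ^ 2 + v ^ 2)) ^ (p + 1) * z ^ (q - 2/3) := by
  intro C hC
  set s := √(1 + C ^ 2)
  have hs : 0 < s := by positivity
  refine ⟨max 1 (2 * s * (p * (1 + |p - 2|) * (κ₁ + κ₂)) / β), by positivity,
    fun u v z hR hcone hz _ => ?_⟩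
  have hRpos : 0 < u ^ 2 + v ^ 2 := lt_of_lt_of_le (by positivity) hR
  set r := √(u ^ 2 + v ^ 2)
  have hr : max 1 (2 * s * (p * (1 + |p - 2|) * (κ₁ + κ₂)) / β) ≤ r :=
    (Real.le_sqrt' (by positivity)).mpr hR
  have hu : 0 ≤ u := nonneg_of_mul_nonneg_right ((abs_nonneg v).trans hcone) hC
  have hbracket := drift_dominates_diffusion hβ hp.le hκ₁.le hκ₂.le hs (Real.sq_sqrt hRpos.le)
    (le_of_max_le_left hr) (le_of_max_le_right hr) (sqrt_sq_add_sq_le_of_abs_le hu hcone)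
  have hrp : r ^ p = (u ^ 2 + v ^ 2) ^ (p / 2) := (Real.rpow_div_two_eq_sqrt p hRpos.le).symm
  have hrp1 : r ^ (p + 1) = (u ^ 2 + v ^ 2) ^ (p / 2 - 2) * r ^ 5 := by
    rw [show p + 1 = p - 4 + (5 : ℕ) by push_cast; ring, Real.rpow_add_natCast (by positivity),
      show p / 2 - 2 = (p - 4) / 2 by ring, Real.rpow_div_two_eq_sqrt _ hRpos.le]
  rw [Lop_radialPow γ h p q κ₁ κ₂ u v z hRpos hz, ← hβdef, hrp, hrp1]
  have := mul_le_mul_of_nonneg_left hbracket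
    (by positivity : 0 ≤ (u ^ 2 + v ^ 2) ^ (p / 2 - 2) * z ^ (q - 2 / 3))
  linarith

/-- Interior Lyapunov estimate in the initial outer region
`R₀ = {r ≥ r*, Cu ≥ |v|, 0 < z ≤ 1}` for `φ(u,v,z) = r^p z^q`. -/
theorem Lyapunov_R0 (γ h p q β κ₁ κ₂ : ℝ)
    (hγ : 0 < γ) (hh : h ∈ Set.Ioo (0:ℝ) 1) (hp : 0 < p) (hq : 0 ≤ q)
    (hβdef : β = ((1 + 2*h)/3) * p - (1 - h) * q) (hβ : 0 < β)
    (hκ₁ : 0 < κ₁) (hκ₂ : 0 < κ₂) :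
    ∀ C > (0:ℝ), ∃ rstar > (0:ℝ), ∀ u v z : ℝ,
      rstar ^ 2 ≤ u ^ 2 + v ^ 2 → |v| ≤ C * u → 0 < z → z ≤ 1 →
      Lop γ h κ₁ κ₂ (fun u v z => (u ^ 2 + v ^ 2) ^ (p/2) * z ^ q) u v z ≤
        -γ * p * (Real.sqrt (u ^ 2 + v ^ 2)) ^ p * z ^ q
          - (β / (2 * Real.sqrt (1 + C ^ 2)))
            * (Real.sqrt (u ^ 2 + v ^ 2)) ^ (p + 1) * z ^ (q - 2/3) :=
  Lyapunov_R0_general γ h p q β κ₁ κ₂ hp hβdef hβ hκ₁ hκ₂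
end

section
/- Let h ∈ (0,1), C > 0, p > 0, q ≥ 0, 0 < β < α < 1 with β = ((1+2h)/3)p − (1−h)q, and c₁ = β/(2C). Define φ₀(u,v,z) = r^p z^q and φ₁(u,v,z) = (r^p z^q/(C^{-2}+1)^{β/2})|r/v|^{β} + c₁ r^p z^q |r/v|^{β} ∫_{u/|v|}^{1/C}(t²+1)^{(α−β−1)/2} dt, with r = √(u²+v²). Then for all sufficiently large C (depending only on h and the exponents), at every point of the interface {u = |v|/C, v ≠ 0, z > 0} one has ∂ᵤφ₀ − ∂ᵤφ₁ ≤ 0. -/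
/-!
On the interface `u = |v| / C` one has `|r / v|² = 1/C² + 1`, so the normalising constant
`(1/C² + 1)^(β/2)` of `φ₁` is exactly `|r / v|^β` there, and the integral in `φ₁` vanishes.
Hence `z^(-q) ∂ᵤφ₀ = p u r^(p-2)` and `z^(-q) ∂ᵤφ₁ = (p + β) u r^(p-2) - c₁ r^(p-1) |r / v|^α`,
and the flux inequality reduces to `c₁ r |r / v|^α ≤ β u`. With `ρ = |r / v| = r / |v|` and
`c₁ = β / (2C)` this reads `ρ^(1+α) ≤ 2`, which holds for `C ≥ 1` since then `1 ≤ ρ`, `ρ² ≤ 2`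
and `α ≤ 1`.
-/

open Real

noncomputable def φ₀ (p q : ℝ) : ℝ → ℝ → ℝ → ℝ :=
  fun u v z => √(u ^ 2 + v ^ 2) ^ p * z ^ q

noncomputable def φ₁ (α β C p q : ℝ) : ℝ → ℝ → ℝ → ℝ :=
  fun u v z =>
    √(u ^ 2 + v ^ 2) ^ p * z ^ q / (1 / C ^ 2 + 1) ^ (β / 2) * |√(u ^ 2 + v ^ 2) / v| ^ β
    + β / (2 * C) * √(u ^ 2 + v ^ 2) ^ p * z ^ q * |√(u ^ 2 + v ^ 2) / v| ^ β
      * ∫ t in (u / |v|)..(1 / C), (t ^ 2 + 1) ^ ((α - β - 1) / 2)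

lemma mul_rpow_le_of_sq_le_two {ρ α : ℝ} (h1 : 1 ≤ ρ) (h2 : ρ ^ 2 ≤ 2) (hα : α ≤ 1) :
    ρ * ρ ^ α ≤ 2 := by
  have : ρ ^ α ≤ ρ := by simpa using Real.rpow_le_rpow_of_exponent_le h1 hα
  nlinarith

lemma hasDerivAt_integral_div_left {g : ℝ → ℝ} (hg : Continuous g) (w b u : ℝ) :
    HasDerivAt (fun u => ∫ t in (u / w)..b, g t) (-g (u / w) * (1 / w)) u := by
  have hleft : HasDerivAt (fun x => ∫ t in x..b, g t) (-g (u / w)) (u / w) :=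
    intervalIntegral.integral_hasDerivAt_left (hg.intervalIntegrable _ _)
      hg.aestronglyMeasurable.stronglyMeasurableAtFilter hg.continuousAt
  exact hleft.comp u ((hasDerivAt_id u).div_const w)

section

variable {v : ℝ}

lemma sqrt_sq_add_sq_pos (hv : v ≠ 0) (u : ℝ) : 0 < √(u ^ 2 + v ^ 2) :=
  Real.sqrt_pos.2 (by positivity)

lemma hasDerivAt_sqrt_sq_add_sq_rpow (hv : v ≠ 0) (s u : ℝ) :
    HasDerivAt (fun u => √(u ^ 2 + v ^ 2) ^ s) (s * u * √(u ^ 2 + v ^ 2) ^ (s - 2)) u := by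
  have hr := sqrt_sq_add_sq_pos hv u
  have hsq : HasDerivAt (fun u => u ^ 2 + v ^ 2) (2 * u) u := by
    simpa using (hasDerivAt_pow 2 u).add_const (v ^ 2)
  convert (hsq.sqrt (by positivity)).rpow_const (p := s) (Or.inl hr.ne') using 1
  rw [show s - 1 = s - 2 + 1 by ring, Real.rpow_add_one hr.ne']
  field_simp

lemma sqrt_rpow_mul_abs_div_rpow (hv : v ≠ 0) (u p β : ℝ) :
    √(u ^ 2 + v ^ 2) ^ p * |√(u ^ 2 + v ^ 2) / v| ^ β = √(u ^ 2 + v ^ 2) ^ (p + β) / |v| ^ β := by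
  have hr := sqrt_sq_add_sq_pos hv u
  rw [abs_div, abs_of_pos hr, Real.div_rpow hr.le (abs_nonneg v), Real.rpow_add hr, mul_div_assoc]

lemma hasDerivAt_sqrt_rpow_mul_abs_div_rpow (hv : v ≠ 0) (u p β : ℝ) :
    HasDerivAt (fun u => √(u ^ 2 + v ^ 2) ^ p * |√(u ^ 2 + v ^ 2) / v| ^ β)
      ((p + β) * u * √(u ^ 2 + v ^ 2) ^ (p - 2) * |√(u ^ 2 + v ^ 2) / v| ^ β) u := by
  simp_rw [sqrt_rpow_mul_abs_div_rpow hv, mul_assoc _ (√(u ^ 2 + v ^ 2) ^ (p - 2))]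
  rw [sqrt_rpow_mul_abs_div_rpow hv, ← mul_div_assoc, show p - 2 + β = p + β - 2 by ring]
  exact (hasDerivAt_sqrt_sq_add_sq_rpow hv _ u).div_const _

lemma pdu_φ₀ (hv : v ≠ 0) (p q u z : ℝ) :
    pdu (φ₀ p q) u v z = p * u * √(u ^ 2 + v ^ 2) ^ (p - 2) * z ^ q :=
  ((hasDerivAt_sqrt_sq_add_sq_rpow hv p u).mul_const _).deriv

lemma abs_sqrt_div_sq_of_interface {C : ℝ} (hv : v ≠ 0) (hC : C ≠ 0) :
    |√((|v| / C) ^ 2 + v ^ 2) / v| ^ 2 = 1 / C ^ 2 + 1 := by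
  rw [sq_abs, div_pow, Real.sq_sqrt (by positivity), div_pow, sq_abs]
  field_simp

lemma hasDerivAt_φ₁ (hv : v ≠ 0) (α β C p q u z : ℝ) :
    HasDerivAt (fun u => φ₁ α β C p q u v z)
      (z ^ q / (1 / C ^ 2 + 1) ^ (β / 2)
          * ((p + β) * u * √(u ^ 2 + v ^ 2) ^ (p - 2) * |√(u ^ 2 + v ^ 2) / v| ^ β)
        + β / (2 * C) * z ^ q *
        (((p + β) * u * √(u ^ 2 + v ^ 2) ^ (p - 2) * |√(u ^ 2 + v ^ 2) / v| ^ β *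
            ∫ t in (u / |v|)..(1 / C), (t ^ 2 + 1) ^ ((α - β - 1) / 2)) -
          √(u ^ 2 + v ^ 2) ^ p * |√(u ^ 2 + v ^ 2) / v| ^ β *
            (((u / |v|) ^ 2 + 1) ^ ((α - β - 1) / 2) / |v|))) u := by
  have hg : Continuous fun t : ℝ => (t ^ 2 + 1) ^ ((α - β - 1) / 2) :=
    (by fun_prop : Continuous fun t : ℝ => t ^ 2 + 1).rpow_const fun t => Or.inl (by positivity)
  have hfun : (fun u => φ₁ α β C p q u v z) = fun u =>
      z ^ q / (1 / C ^ 2 + 1) ^ (β / 2) * (√(u ^ 2 + v ^ 2) ^ p * |√(u ^ 2 + v ^ 2) / v| ^ β)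
        + β / (2 * C) * z ^ q * (√(u ^ 2 + v ^ 2) ^ p * |√(u ^ 2 + v ^ 2) / v| ^ β
          * ∫ t in (u / |v|)..(1 / C), (t ^ 2 + 1) ^ ((α - β - 1) / 2)) := by
    funext u
    simp only [φ₁]
    ring
  have hf := hasDerivAt_sqrt_rpow_mul_abs_div_rpow hv u p β
  rw [hfun]
  have hJ := hasDerivAt_integral_div_left hg |v| (1 / C) u
  exact ((hf.const_mul _).add ((hf.mul hJ).const_mul _)).congr_deriv (by ring)

lemma pdu_φ₁_of_interface {C : ℝ} (hv : v ≠ 0) (hC : C ≠ 0) (α β p q z : ℝ) :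
    pdu (φ₁ α β C p q) (|v| / C) v z =
      z ^ q * √((|v| / C) ^ 2 + v ^ 2) ^ (p - 2) * ((p + β) * (|v| / C)
        - β / (2 * C) * √((|v| / C) ^ 2 + v ^ 2) * |√((|v| / C) ^ 2 + v ^ 2) / v| ^ α) := by
  have hu₀ : |v| / C / |v| = 1 / C := by field_simp
  have hρsq := abs_sqrt_div_sq_of_interface hv hC
  rw [pdu, (hasDerivAt_φ₁ hv α β C p q _ z).deriv, hu₀, intervalIntegral.integral_same,
    one_div_pow]
  set r₀ := √((|v| / C) ^ 2 + v ^ 2)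
  set ρ := |r₀ / v|
  have hr₀ : 0 < r₀ := sqrt_sq_add_sq_pos hv _
  have hρ : 0 < ρ := abs_pos.2 (div_ne_zero hr₀.ne' hv)
  have hρv : ρ * |v| = r₀ := by
    rw [show ρ = |r₀ / v| from rfl, abs_div, abs_of_pos hr₀, div_mul_cancel₀ _ (abs_ne_zero.2 hv)]
  have hrpow : ∀ s : ℝ, (1 / C ^ 2 + 1) ^ (s / 2) = ρ ^ s := fun s => by
    rw [← hρsq, Real.rpow_div_two_eq_sqrt _ (by positivity), Real.sqrt_sq hρ.le]
  rw [hrpow, hrpow, Real.rpow_sub hρ, Real.rpow_sub hρ, Real.rpow_one, Real.rpow_sub hr₀,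
    Real.rpow_two, ← hρv]
  field_simp
  ring

lemma flux_condition_of_interface {C α β : ℝ} (hv : v ≠ 0) (hC : 1 ≤ C) (hβ : 0 ≤ β)
    (hα : α ≤ 1) :
    β / (2 * C) * √((|v| / C) ^ 2 + v ^ 2) * |√((|v| / C) ^ 2 + v ^ 2) / v| ^ α
      ≤ β * (|v| / C) := by
  have hC₀ : 0 < C := by linarith
  set r₀ := √((|v| / C) ^ 2 + v ^ 2)
  set ρ := |r₀ / v|
  have hρsq : ρ ^ 2 = 1 / C ^ 2 + 1 := abs_sqrt_div_sq_of_interface hv hC₀.ne'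
  have hC2 : 1 / C ^ 2 ≤ 1 := by
    rw [div_le_one (by positivity)]
    nlinarith
  have hρ : 1 ≤ ρ := by nlinarith [abs_nonneg (r₀ / v), show 0 ≤ 1 / C ^ 2 by positivity]
  have hr₀ : r₀ = ρ * |v| := by
    rw [show ρ = |r₀ / v| from rfl, abs_div, abs_of_nonneg (Real.sqrt_nonneg _),
      div_mul_cancel₀ _ (abs_ne_zero.2 hv)]
  have hρα := mul_rpow_le_of_sq_le_two hρ (by linarith) hα
  rw [hr₀]
  calc β / (2 * C) * (ρ * |v|) * ρ ^ α = β * |v| / (2 * C) * (ρ * ρ ^ α) := by ring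
    _ ≤ β * |v| / (2 * C) * 2 := by gcongr
    _ = β * (|v| / C) := by field_simp

end

theorem flux_R0_R1_general (p q α β : ℝ)
    (hβ : 0 < β) (hα : α < 1) :
    ∃ C₀ > (0:ℝ), ∀ C ≥ C₀, ∀ v z : ℝ, v ≠ 0 → 0 < z →
      pdu (fun u v z => (Real.sqrt (u ^ 2 + v ^ 2)) ^ p * z ^ q) (|v| / C) v z
        - pdu (fun u v z =>
            (Real.sqrt (u ^ 2 + v ^ 2)) ^ p * z ^ q / (1/C ^ 2 + 1) ^ (β/2)
                * |Real.sqrt (u ^ 2 + v ^ 2) / v| ^ β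
              + (β / (2*C)) * (Real.sqrt (u ^ 2 + v ^ 2)) ^ p * z ^ q
                * |Real.sqrt (u ^ 2 + v ^ 2) / v| ^ β
                * ∫ t in (u / |v|)..(1/C), (t ^ 2 + 1) ^ ((α - β - 1)/2))
            (|v| / C) v z ≤ 0 := by
  refine ⟨1, one_pos, fun C hC v z hv hz => ?_⟩
  change pdu (φ₀ p q) (|v| / C) v z - pdu (φ₁ α β C p q) (|v| / C) v z ≤ 0
  rw [pdu_φ₀ hv, pdu_φ₁_of_interface hv (by positivity)]
  have hflux := flux_condition_of_interface hv hC hβ.le hα.le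
  have hpos : 0 ≤ z ^ q * √((|v| / C) ^ 2 + v ^ 2) ^ (p - 2) := by positivity
  nlinarith [mul_le_mul_of_nonneg_left hflux hpos]

/-- Boundary-flux estimate on the interface `{u = |v|/C}` between regions `R₀` and `R₁`:
for all sufficiently large `C`, `∂ᵤφ₀ − ∂ᵤφ₁ ≤ 0` there, where `c₁ = β/(2C)`. -/
theorem flux_R0_R1 (h p q α β : ℝ)
    (hh : h ∈ Set.Ioo (0:ℝ) 1) (hp : 0 < p) (hq : 0 ≤ q)
    (hβ : 0 < β) (hβα : β < α) (hα : α < 1)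
    (hrel : β = ((1 + 2*h)/3) * p - (1 - h) * q) :
    ∃ C₀ > (0:ℝ), ∀ C ≥ C₀, ∀ v z : ℝ, v ≠ 0 → 0 < z →
      pdu (fun u v z => (Real.sqrt (u ^ 2 + v ^ 2)) ^ p * z ^ q) (|v| / C) v z
        - pdu (fun u v z =>
            (Real.sqrt (u ^ 2 + v ^ 2)) ^ p * z ^ q / (1/C ^ 2 + 1) ^ (β/2)
                * |Real.sqrt (u ^ 2 + v ^ 2) / v| ^ β
              + (β / (2*C)) * (Real.sqrt (u ^ 2 + v ^ 2)) ^ p * z ^ q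
                * |Real.sqrt (u ^ 2 + v ^ 2) / v| ^ β
                * ∫ t in (u / |v|)..(1/C), (t ^ 2 + 1) ^ ((α - β - 1)/2))
            (|v| / C) v z ≤ 0 :=
  flux_R0_R1_general p q α β hβ hα
end
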